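/- Let α, β be positive integers and let C be a (1+u,1+uv)-additive constacyclic code in R1^α × R2^β. Then the Gray image Φ(C) is invariant under the block-shift permutation σ, and Φ is distance invariant on C: for all c, c' ∈ C, the Hamming distance between Φ(c) and Φ(c') equals the Lee distance d_L(c,c') = w_L(c − c'). -/

import Mathlib

open TrivSqZeroExt Finset

set_option synthInstance.maxHeartbeats 1000000
set_option maxHeartbeats 2000000

noncomputable section

/-- `Z2` is the field with two elements. -/
abbrev Z2 := ZMod 2

/-- `R1 = Z2[u] = Z2 + uZ2` with `u² = 0`. -/
abbrev R1 := DualNumber Z2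

/-- `R2 = Z2[u,v] = Z2 + uZ2 + vZ2 + uvZ2` with `u² = v² = 0`, `uv = vu`,
realized as dual numbers over `R1`. -/
abbrev R2 := DualNumber R1

/-- The element `u` of `R1`. -/
def u1 : R1 := DualNumber.eps

/-- The inclusion of `Z2` into `R1`. -/
def ofZ2R1 (a : Z2) : R1 := TrivSqZeroExt.inl a

/-- The element `u` of `R2`. -/
def uu : R2 := TrivSqZeroExt.inl DualNumber.eps

/-- The element `v` of `R2`. -/
def vv : R2 := DualNumber.eps

/-- The inclusion of `Z2` into `R2`. -/
def ofZ2R2 (a : Z2) : R2 := TrivSqZeroExt.inl (TrivSqZeroExt.inl a)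

/-- `η : R2 → R1`, `a + ub + vc + uvd ↦ a + ub` (reduction modulo `v`),
as a ring homomorphism. -/
def eta : R2 →+* R1 where
  toFun := TrivSqZeroExt.fst
  map_one' := rfl
  map_mul' := TrivSqZeroExt.fst_mul
  map_zero' := rfl
  map_add' := TrivSqZeroExt.fst_add

/-- The ambient space `R1^α × R2^β`. -/
abbrev V (α β : ℕ) := (Fin α → R1) × (Fin β → R2)

/-- The scalar multiplication of `R2` on `R1^α × R2^β`:
`l • (a₀,…,a_{α-1},b₀,…,b_{β-1}) = (η(l)a₀,…,η(l)a_{α-1}, lb₀,…,lb_{β-1})`. -/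
instance instSMulV (α β : ℕ) : SMul R2 (V α β) :=
  ⟨fun l w => (fun i => eta l * w.1 i, fun j => l * w.2 j)⟩

lemma smulV_def {α β : ℕ} (l : R2) (w : V α β) :
    l • w = (fun i => eta l * w.1 i, fun j => l * w.2 j) := rfl

instance instMulActionV (α β : ℕ) : MulAction R2 (V α β) where
  one_smul w := by
    refine Prod.ext (funext fun i => ?_) (funext fun j => ?_)
    · show eta 1 * w.1 i = w.1 i; simp
    · show (1 : R2) * w.2 j = w.2 j; simp
  mul_smul l l' w := by
    refine Prod.ext (funext fun i => ?_) (funext fun j => ?_)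
    · show eta (l * l') * w.1 i = eta l * (eta l' * w.1 i); rw [map_mul, mul_assoc]
    · show l * l' * w.2 j = l * (l' * w.2 j); rw [mul_assoc]

instance instDistribMulActionV (α β : ℕ) : DistribMulAction R2 (V α β) where
  smul_zero l := by
    refine Prod.ext (funext fun i => ?_) (funext fun j => ?_)
    · show eta l * (0 : R1) = 0; simp
    · show l * (0 : R2) = 0; simp
  smul_add l w w' := by
    refine Prod.ext (funext fun i => ?_) (funext fun j => ?_)
    · show eta l * (w.1 i + w'.1 i) = eta l * w.1 i + eta l * w'.1 i; rw [mul_add]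
    · show l * (w.2 j + w'.2 j) = l * w.2 j + l * w'.2 j; rw [mul_add]

/-- `R1^α × R2^β` is an `R2`-module; a `Z2[u]Z2[u,v]`-additive code is an
`R2`-submodule of this module. -/
instance instModuleV (α β : ℕ) : Module R2 (V α β) where
  add_smul l l' w := by
    refine Prod.ext (funext fun i => ?_) (funext fun j => ?_)
    · show eta (l + l') * w.1 i = eta l * w.1 i + eta l' * w.1 i
      rw [map_add, add_mul]
    · show (l + l') * w.2 j = l * w.2 j + l' * w.2 j; rw [add_mul]
  zero_smul w := by
    refine Prod.ext (funext fun i => ?_) (funext fun j => ?_)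
    · show eta 0 * w.1 i = 0; simp
    · show (0 : R2) * w.2 j = 0; simp

/-- The cyclic shift `S` on `R1^α × R2^β`. -/
def shiftS {α β : ℕ} [NeZero α] [NeZero β] (w : V α β) : V α β :=
  (fun i => w.1 (i - 1), fun j => w.2 (j - 1))

/-- The `(1+u, 1+uv)`-constacyclic shift `τ` on `R1^α × R2^β`. -/
def tau {α β : ℕ} [NeZero α] [NeZero β] (w : V α β) : V α β :=
  (fun i => (if i = 0 then 1 + u1 else 1) * w.1 (i - 1),
   fun j => (if j = 0 then 1 + uu * vv else 1) * w.2 (j - 1))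

/-- The inner product on `R1^α × R2^β`:
`⟨x,y⟩ = uv·ι(Σᵢ xᵢyᵢ) + Σⱼ x_{α+j} y_{α+j}` where `ι : R1 → R2` is the
natural inclusion. -/
def innerP {α β : ℕ} (x y : V α β) : R2 :=
  uu * vv * TrivSqZeroExt.inl (∑ i, x.1 i * y.1 i) + ∑ j, x.2 j * y.2 j

/-- The additive dual of a code `C ⊆ R1^α × R2^β`. -/
def dualSet {α β : ℕ} (C : Set (V α β)) : Set (V α β) :=
  {y | ∀ x ∈ C, innerP x y = 0}

instance doubleNeZero (α : ℕ) [NeZero α] : NeZero (α + α) :=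
  ⟨by have := NeZero.ne α; omega⟩

/-- The image space of the Gray map: `Z2^{2α+8β}`, grouped as a block of
`2α` coordinates followed by four blocks of `2β` coordinates. -/
abbrev W (α β : ℕ) :=
  (Fin (α + α) → Z2) × (Fin (β + β) → Z2) × (Fin (β + β) → Z2) ×
    (Fin (β + β) → Z2) × (Fin (β + β) → Z2)

/-- Cyclic shift by one position of a tuple. -/
def cyc {n : ℕ} [NeZero n] {A : Type*} (f : Fin n → A) : Fin n → A :=
  fun i => f (i - 1)

/-- The block-shift permutation `σ` of `Z2^{2α+8β}`: the block of `2α`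
coordinates and each of the four blocks of `2β` coordinates are cyclically
shifted by one position. -/
def sigmaW {α β : ℕ} [NeZero α] [NeZero β] (w : W α β) : W α β :=
  (cyc w.1, cyc w.2.1, cyc w.2.2.1, cyc w.2.2.2.1, cyc w.2.2.2.2)

/-- The Gray map `Φ : R1^α × R2^β → Z2^{2α+8β}`. -/
def Phi {α β : ℕ} (w : V α β) : W α β :=
  let r : Fin α → Z2 := fun i => (w.1 i).fst
  let q : Fin α → Z2 := fun i => (w.1 i).snd
  let a : Fin β → Z2 := fun j => (w.2 j).fst.fst
  let b : Fin β → Z2 := fun j => (w.2 j).fst.snd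
  let c : Fin β → Z2 := fun j => (w.2 j).snd.fst
  let d : Fin β → Z2 := fun j => (w.2 j).snd.snd
  (Fin.append q (fun i => q i + r i),
   Fin.append d (fun j => a j + d j),
   Fin.append (fun j => b j + d j) (fun j => a j + b j + d j),
   Fin.append (fun j => c j + d j) (fun j => a j + c j + d j),
   Fin.append (fun j => b j + c j + d j) (fun j => a j + b j + c j + d j))

/-- Lee weight on `R1`: `w_L(r + uq) = w_H(q, q + r)`. -/
def leeR1 (x : R1) : ℕ :=
  (if x.snd ≠ 0 then 1 else 0) + (if x.snd + x.fst ≠ 0 then 1 else 0)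

/-- Lee weight on `R2`:
`w_L(a+ub+vc+uvd) = w_H(d, a+d, b+d, a+b+d, c+d, a+c+d, b+c+d, a+b+c+d)`. -/
def leeR2 (y : R2) : ℕ :=
  let a := y.fst.fst; let b := y.fst.snd; let c := y.snd.fst; let d := y.snd.snd
  (if d ≠ 0 then 1 else 0) + (if a + d ≠ 0 then 1 else 0) +
  (if b + d ≠ 0 then 1 else 0) + (if a + b + d ≠ 0 then 1 else 0) +
  (if c + d ≠ 0 then 1 else 0) + (if a + c + d ≠ 0 then 1 else 0) +
  (if b + c + d ≠ 0 then 1 else 0) + (if a + b + c + d ≠ 0 then 1 else 0)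

/-- Lee weight on `R1^α × R2^β`: the sum of the Lee weights of the
coordinates. -/
def leeWt {α β : ℕ} (w : V α β) : ℕ :=
  ∑ i, leeR1 (w.1 i) + ∑ j, leeR2 (w.2 j)

/-- Hamming weight on `Z2^{2α+8β}`. -/
def wtW {α β : ℕ} (w : W α β) : ℕ :=
  hammingNorm w.1 + hammingNorm w.2.1 + hammingNorm w.2.2.1 +
    hammingNorm w.2.2.2.1 + hammingNorm w.2.2.2.2

/-- Hamming distance on `Z2^{2α+8β}`. -/
def distW {α β : ℕ} (w w' : W α β) : ℕ :=
  hammingDist w.1 w'.1 + hammingDist w.2.1 w'.2.1 + hammingDist w.2.2.1 w'.2.2.1 +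
    hammingDist w.2.2.2.1 w'.2.2.2.1 + hammingDist w.2.2.2.2 w'.2.2.2.2

/-!
Multiplication by the unit `1 + u` of `R1` (resp. `1 + uv` of `R2`) adds `r` to `q` (resp. `a` to
`d`) and fixes the other components. Since `2 = 0` in `Z2`, it therefore swaps the two entries of
each Gray pair `(q, q + r)`, `(d, a + d)`, `(b + d, a + b + d)`, `(c + d, a + c + d)`,
`(b + c + d, a + b + c + d)`. The constacyclic shift `τ` multiplies the coordinate that wraps around
by this unit, so on each Gray block, which lists the first entries of the pairs followed by the
second entries, it acts as the cyclic shift: `Φ ∘ τ = σ ∘ Φ`, whence `σ (Φ C) = Φ (τ C) = Φ C`.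
Distance invariance holds because `Φ` is additive and carries the Lee weight to the Hamming weight.
-/

namespace Fin

variable {n : ℕ} [NeZero n]

lemma val_sub_one_eq_ite (i : Fin n) : (i - 1).val = if i = 0 then n - 1 else i.val - 1 := by
  obtain ⟨m, rfl⟩ := Nat.exists_eq_succ_of_ne_zero (NeZero.ne n)
  simpa using coe_sub_one i

lemma val_neg_one_of_neZero : (-1 : Fin n).val = n - 1 := by
  simpa using val_sub_one_eq_ite (0 : Fin n)

lemma castAdd_sub_one_of_ne_zero {i : Fin n} (hi : i ≠ 0) :
    castAdd n i - 1 = castAdd n (i - 1) := by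
  ext
  simp [val_sub_one_eq_ite, hi, Fin.ext_iff]

lemma castAdd_zero_sub_one : castAdd n (0 : Fin n) - 1 = natAdd n (-1) := by
  ext
  simp [val_sub_one_eq_ite, val_neg_one_of_neZero, Fin.ext_iff]
  omega

lemma natAdd_sub_one_of_ne_zero {i : Fin n} (hi : i ≠ 0) :
    natAdd n i - 1 = natAdd n (i - 1) := by
  have hi' : (i : ℕ) ≠ 0 := Fin.val_ne_zero_iff.mpr hi
  ext
  simp [val_sub_one_eq_ite, hi, Fin.ext_iff]
  omega

lemma natAdd_zero_sub_one : natAdd n (0 : Fin n) - 1 = castAdd n (-1) := by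
  ext
  simp [val_sub_one_eq_ite, val_neg_one_of_neZero, Fin.ext_iff]
  omega

end Fin

section TwistedShift

variable {n : ℕ} [NeZero n] {A B : Type*}

def twistedShift (t : B → B) (x : Fin n → B) : Fin n → B :=
  fun i => if i = 0 then t (x (i - 1)) else x (i - 1)

theorem append_twistedShift_eq_cyc_append (p q : B → A) {t : B → B}
    (hp : ∀ b, p (t b) = q b) (hq : ∀ b, q (t b) = p b) (x : Fin n → B) :
    Fin.append (fun i => p (twistedShift t x i)) (fun i => q (twistedShift t x i)) =
      cyc (Fin.append (fun i => p (x i)) (fun i => q (x i))) := by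
  funext k
  induction k using Fin.addCases with
  | left i =>
    rw [Fin.append_left, cyc]
    by_cases hi : i = 0
    · rw [hi, Fin.castAdd_zero_sub_one, Fin.append_right]
      simp [twistedShift, hp]
    · rw [Fin.castAdd_sub_one_of_ne_zero hi, Fin.append_left]
      simp [twistedShift, hi]
  | right i =>
    rw [Fin.append_right, cyc]
    by_cases hi : i = 0
    · rw [hi, Fin.natAdd_zero_sub_one, Fin.append_left]
      simp [twistedShift, hq]
    · rw [Fin.natAdd_sub_one_of_ne_zero hi, Fin.append_right]
      simp [twistedShift, hi]

end TwistedShift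

lemma fst_one_add_u1_mul (x : R1) : ((1 + u1) * x).fst = x.fst := by
  simp [u1]

lemma snd_one_add_u1_mul (x : R1) : ((1 + u1) * x).snd = x.snd + x.fst := by
  simp [u1, add_comm]

lemma fst_one_add_uu_mul_vv_mul (y : R2) : ((1 + uu * vv) * y).fst = y.fst := by
  simp [uu, vv]

lemma snd_fst_one_add_uu_mul_vv_mul (y : R2) : ((1 + uu * vv) * y).snd.fst = y.snd.fst := by
  simp [uu, vv]

lemma snd_snd_one_add_uu_mul_vv_mul (y : R2) :
    ((1 + uu * vv) * y).snd.snd = y.snd.snd + y.fst.fst := by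
  simp [uu, vv, add_comm]

lemma tau_eq_twistedShift {α β : ℕ} [NeZero α] [NeZero β] (w : V α β) :
    tau w = (twistedShift ((1 + u1) * ·) w.1, twistedShift ((1 + uu * vv) * ·) w.2) := by
  ext i <;> simp only [tau, twistedShift] <;> split_ifs <;> simp

theorem Phi_tau {α β : ℕ} [NeZero α] [NeZero β] (w : V α β) : Phi (tau w) = sigmaW (Phi w) := by
  rw [tau_eq_twistedShift]
  refine Prod.ext
    (append_twistedShift_eq_cyc_append (fun x : R1 => x.snd) (fun x => x.snd + x.fst) ?_ ?_ w.1) <|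
    Prod.ext (append_twistedShift_eq_cyc_append (fun y : R2 => y.snd.snd)
      (fun y => y.fst.fst + y.snd.snd) ?_ ?_ w.2) <|
    Prod.ext (append_twistedShift_eq_cyc_append (fun y : R2 => y.fst.snd + y.snd.snd)
      (fun y => y.fst.fst + y.fst.snd + y.snd.snd) ?_ ?_ w.2) <|
    Prod.ext (append_twistedShift_eq_cyc_append (fun y : R2 => y.snd.fst + y.snd.snd)
      (fun y => y.fst.fst + y.snd.fst + y.snd.snd) ?_ ?_ w.2)
    (append_twistedShift_eq_cyc_append (fun y : R2 => y.fst.snd + y.snd.fst + y.snd.snd)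
      (fun y => y.fst.fst + y.fst.snd + y.snd.fst + y.snd.snd) ?_ ?_ w.2)
  all_goals
    intro x
    simp only [fst_one_add_u1_mul, snd_one_add_u1_mul, fst_one_add_uu_mul_vv_mul,
      snd_fst_one_add_uu_mul_vv_mul, snd_snd_one_add_uu_mul_vv_mul] <;> grind

lemma Phi_sub {α β : ℕ} (w w' : V α β) : Phi (w - w') = Phi w - Phi w' := by
  refine Prod.ext ?_ (Prod.ext ?_ (Prod.ext ?_ (Prod.ext ?_ ?_))) <;>
  · funext k
    induction k using Fin.addCases <;>
      simp only [Phi, Prod.fst_sub, Prod.snd_sub, Pi.sub_apply, Fin.append_left, Fin.append_right,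
        fst_sub, snd_sub] <;>
      ring

lemma hammingNorm_append {m n : ℕ} {A : Type*} [Zero A] [DecidableEq A] (f : Fin m → A)
    (g : Fin n → A) : hammingNorm (Fin.append f g) = hammingNorm f + hammingNorm g := by
  simp only [hammingNorm, Finset.card_filter, Fin.sum_univ_add, Fin.append_left, Fin.append_right]

lemma wtW_Phi {α β : ℕ} (w : V α β) : wtW (Phi w) = leeWt w := by
  simp only [wtW, Phi, hammingNorm_append]
  simp only [hammingNorm, Finset.card_filter, leeWt, leeR1, leeR2, Finset.sum_add_distrib]
  ring

lemma distW_eq_wtW_sub {α β : ℕ} (w w' : W α β) : distW w w' = wtW (w - w') := by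
  simp only [distW, wtW, hammingDist, hammingNorm, Prod.fst_sub, Prod.snd_sub, Pi.sub_apply,
    sub_ne_zero]

/-- The Gray image of a `(1+u,1+uv)`-additive constacyclic code
is invariant under the block-shift permutation `σ`, and the Gray map is
distance invariant on the code. -/
theorem gray_image_constacyclic_shift_invariant_and_distance_invariant
    (α β : ℕ) [NeZero α] [NeZero β] (C : Submodule R2 (V α β))
    (hC : tau '' (C : Set (V α β)) = (C : Set (V α β))) :
    sigmaW '' (Phi '' (C : Set (V α β))) = Phi '' (C : Set (V α β)) ∧
      ∀ c ∈ C, ∀ c' ∈ C, distW (Phi c) (Phi c') = leeWt (c - c') := by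
  refine ⟨?_, fun c _ c' _ => ?_⟩
  · rw [Set.image_image, ← funext Phi_tau, ← Set.image_image, hC]
  · rw [distW_eq_wtW_sub, ← Phi_sub, wtW_Phi]

end
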